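/- arXiv:0901.2700 — 5 statements merged into one kernel-verified Lean document; each statement's English description precedes it below -/
import Mathlib

section
/- Let c(x̂, ŷ) = f(d(x̂, ŷ)) where d is the projected geodesic distance on a round sphere of radius R and f is twice continuously differentiable. Then at x̂ = 0 and ŷ ≠ 0, the Hessian of c in x̂ is c_{x̂_i x̂_j} = (ŷ_i ŷ_j/|ŷ|²)(f''(d) − f'(d)/|ŷ|) + δ_{ij} f'(d)/|ŷ|, where d = d(0, ŷ). -/
open scoped RealInnerProductSpace

/-- The stereographically projected geodesic distance on the round sphere of radius `R`. -/
noncomputable def dproj (R : ℝ) {n : ℕ} (x y : EuclideanSpace ℝ (Fin n)) : ℝ :=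
  R * Real.arccos ((R ^ 2 + ⟪x, y⟫) /
    (Real.sqrt (R ^ 2 + ‖x‖ ^ 2) * Real.sqrt (R ^ 2 + ‖y‖ ^ 2)))

namespace CostHessAux

variable {n : ℕ}

local notation "E" => EuclideanSpace ℝ (Fin n)

noncomputable def sf (R : ℝ) (x : E) : ℝ := Real.sqrt (R ^ 2 + ‖x‖ ^ 2)

noncomputable def uf (R : ℝ) (y x : E) : ℝ := (R ^ 2 + ⟪x, y⟫) / (sf R x * sf R y)

lemma sf_pos {R : ℝ} (hR : 0 < R) (x : E) : 0 < sf R x :=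
  Real.sqrt_pos.2 (by positivity)

lemma sf_zero {R : ℝ} (hR : 0 < R) : sf R (0 : E) = R := by
  simp [sf, Real.sqrt_sq hR.le]

lemma hasFDerivAt_normsq (x : E) :
    HasFDerivAt (fun t : E => (‖t‖ ^ 2 : ℝ)) ((2 : ℝ) • (innerSL ℝ x)) x := by
  have h := ((hasFDerivAt_id x).inner ℝ (hasFDerivAt_id x)).congr_of_eventuallyEq
    (Filter.Eventually.of_forall fun t : E => (real_inner_self_eq_norm_sq t).symm)
  refine h.congr_fderiv ?_
  ext v
  simp [real_inner_comm, two_mul]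

lemma hasFDerivAt_sf {R : ℝ} (hR : 0 < R) (x : E) :
    HasFDerivAt (sf R) ((sf R x)⁻¹ • innerSL ℝ x) x := by
  have hq : (0:ℝ) < R ^ 2 + ‖x‖ ^ 2 := by positivity
  have h := (Real.hasDerivAt_sqrt hq.ne').comp_hasFDerivAt x
    ((hasFDerivAt_const (R ^ 2) x).add (hasFDerivAt_normsq x))
  refine h.congr_fderiv ?_
  ext v
  have hs : Real.sqrt (R ^ 2 + ‖x‖ ^ 2) ≠ 0 := (sf_pos hR x).ne'
  simp [sf]
  field_simp

lemma hasFDerivAt_inner_right (y x : E) :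
    HasFDerivAt (fun t : E => (⟪t, y⟫ : ℝ)) (innerSL ℝ y) x :=
  (innerSL ℝ y).hasFDerivAt.congr_of_eventuallyEq
    (Filter.Eventually.of_forall fun t => (real_inner_comm t y).symm)

lemma hasFDerivAt_uf {R : ℝ} (hR : 0 < R) (y x : E) :
    HasFDerivAt (uf R y)
      (((sf R x * sf R y)⁻¹) • innerSL ℝ y -
        ((R ^ 2 + ⟪x, y⟫) / (sf R x ^ 3 * sf R y)) • innerSL ℝ x) x := by
  have hsx := sf_pos hR x
  have hsy := sf_pos hR y
  have hden : sf R x * sf R y ≠ 0 := by positivity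
  have hN : HasFDerivAt (fun t : E => (R ^ 2 + ⟪t, y⟫ : ℝ)) (innerSL ℝ y) x := by
    exact ((hasFDerivAt_const (R ^ 2) x).add (hasFDerivAt_inner_right y x)).congr_fderiv (zero_add _)
  have hinv : HasFDerivAt (fun t : E => (sf R t * sf R y)⁻¹)
      ((-((sf R x * sf R y) ^ 2)⁻¹) • ((sf R y) • ((sf R x)⁻¹ • innerSL ℝ x))) x :=
    (hasDerivAt_inv hden).comp_hasFDerivAt x ((hasFDerivAt_sf hR x).mul_const (sf R y))
  have h := hN.mul hinv
  have heq : (uf R y : E → ℝ) = fun t => (R ^ 2 + ⟪t, y⟫) * (sf R t * sf R y)⁻¹ := by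
    funext t; simp [uf, div_eq_mul_inv]
  rw [heq]
  refine h.congr_fderiv ?_
  ext v
  simp [ContinuousLinearMap.smul_apply]
  field_simp
  ring

lemma hasFDerivAt_dproj {R : ℝ} (hR : 0 < R) (y x : E)
    (h1 : -1 < uf R y x) (h2 : uf R y x < 1) :
    HasFDerivAt (fun t : E => dproj R t y)
      ((R * -(1 / Real.sqrt (1 - uf R y x ^ 2))) •
        (((sf R x * sf R y)⁻¹) • innerSL ℝ y -
          ((R ^ 2 + ⟪x, y⟫) / (sf R x ^ 3 * sf R y)) • innerSL ℝ x)) x := by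
  have h := ((Real.hasDerivAt_arccos (ne_of_gt h1) (ne_of_lt h2)).comp_hasFDerivAt x
    (hasFDerivAt_uf hR y x)).const_mul R
  rw [smul_smul] at h
  exact h

end CostHessAux

/-- For a cost `c(x̂, ŷ) = f(d(x̂, ŷ))` with `f` twice continuously differentiable on
`(0, Rπ)`, the Hessian of `c` in `x̂` at `x̂ = 0`, `ŷ ≠ 0` is
`c_{x̂ᵢx̂ⱼ} = (ŷᵢŷⱼ/‖ŷ‖²)(f''(d) − f'(d)/‖ŷ‖) + δᵢⱼ f'(d)/‖ŷ‖`, where `d = d(0, ŷ)`. -/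
theorem cost_hessian_at_zero
    {n : ℕ} (R : ℝ) (hR : 0 < R) (f : ℝ → ℝ)
    (hf : ContDiffOn ℝ 2 f (Set.Ioo 0 (R * Real.pi)))
    (y : EuclideanSpace ℝ (Fin n)) (hy : y ≠ 0) :
    ∀ i j : Fin n,
      fderiv ℝ
        (fun x => fderiv ℝ (fun x' => f (dproj R x' y)) x (EuclideanSpace.single j 1))
        0 (EuclideanSpace.single i 1) =
      (y i * y j / ‖y‖ ^ 2) *
          (deriv (deriv f) (dproj R 0 y) - deriv f (dproj R 0 y) / ‖y‖) +
        (if i = j then (1 : ℝ) else 0) * (deriv f (dproj R 0 y) / ‖y‖) := by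
  classical
  intro i j
  have hy0 : (0:ℝ) < ‖y‖ := norm_pos_iff.2 hy
  set A := CostHessAux.sf R y with hA
  have hApos : 0 < A := CostHessAux.sf_pos hR y
  have hA2 : A ^ 2 = R ^ 2 + ‖y‖ ^ 2 := Real.sq_sqrt (by positivity)
  have hRA : R < A := by
    nlinarith [hApos, hA2, hy0]
  have hu0 : CostHessAux.uf R y 0 = R / A := by
    rw [CostHessAux.uf, CostHessAux.sf_zero hR, inner_zero_left]
    rw [add_zero, sq]
    have hAne := hApos.ne'
    field_simp
    rw [← hA]
    exact div_self hAne
  have hu0m : CostHessAux.uf R y 0 ∈ Set.Ioo (-1:ℝ) 1 := by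
    rw [hu0]
    constructor
    · have : (0:ℝ) < R / A := div_pos hR hApos
      linarith
    · exact (div_lt_one hApos).2 hRA
  have hdproj0 : dproj R 0 y = R * Real.arccos (CostHessAux.uf R y 0) := rfl
  have hd0m : dproj R 0 y ∈ Set.Ioo 0 (R * Real.pi) := by
    rw [hdproj0]
    constructor
    · exact mul_pos hR (Real.arccos_pos.2 hu0m.2)
    · have h1 : Real.arccos (CostHessAux.uf R y 0) < Real.pi / 2 :=
        Real.arccos_lt_pi_div_two.2 (by rw [hu0]; exact div_pos hR hApos)
      have h2 : Real.arccos (CostHessAux.uf R y 0) < Real.pi := by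
        linarith [Real.pi_pos]
      exact (mul_lt_mul_iff_right₀ hR).2 h2
  -- continuity
  have hsfc : Continuous (CostHessAux.sf (n := n) R) :=
    Real.continuous_sqrt.comp (continuous_const.add (continuous_norm.pow 2))
  have hufc : Continuous (CostHessAux.uf R y) := by
    refine Continuous.div (continuous_const.add ?_) (hsfc.mul continuous_const) ?_
    · exact Continuous.inner continuous_id continuous_const
    · exact fun x => (mul_pos (CostHessAux.sf_pos hR x) hApos).ne'
  have hdc : Continuous (fun x : EuclideanSpace ℝ (Fin n) => dproj R x y) :=
    continuous_const.mul (Real.continuous_arccos.comp hufc)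
  have hev : ∀ᶠ x in nhds (0 : EuclideanSpace ℝ (Fin n)),
      CostHessAux.uf R y x ∈ Set.Ioo (-1:ℝ) 1 ∧ dproj R x y ∈ Set.Ioo 0 (R * Real.pi) := by
    refine Filter.Eventually.and ?_ ?_
    · exact hufc.continuousAt.eventually_mem (isOpen_Ioo.mem_nhds hu0m)
    · exact hdc.continuousAt.eventually_mem (isOpen_Ioo.mem_nhds hd0m)
  -- the explicit first derivative in direction `single j 1`
  set φ : EuclideanSpace ℝ (Fin n) → ℝ := fun x =>
    deriv f (dproj R x y) * (R * -(Real.sqrt (1 - CostHessAux.uf R y x ^ 2))⁻¹) *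
      ((CostHessAux.sf R x * A)⁻¹ * y j -
        (R ^ 2 + ⟪x, y⟫) * (CostHessAux.sf R x ^ 3 * A)⁻¹ * x j) with hφ
  have hkey : ∀ x : EuclideanSpace ℝ (Fin n),
      CostHessAux.uf R y x ∈ Set.Ioo (-1:ℝ) 1 → dproj R x y ∈ Set.Ioo 0 (R * Real.pi) →
      fderiv ℝ (fun x' => f (dproj R x' y)) x (EuclideanSpace.single j 1) = φ x := by
    intro x hu hd
    have hdf : HasDerivAt f (deriv f (dproj R x y)) (dproj R x y) :=
      ((hf.differentiableOn (by norm_num)).differentiableAt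
        (isOpen_Ioo.mem_nhds hd)).hasDerivAt
    have H := hdf.comp_hasFDerivAt x (CostHessAux.hasFDerivAt_dproj hR y x hu.1 hu.2)
    rw [show (fun x' => f (dproj R x' y)) = f ∘ (fun t => dproj R t y) from rfl, H.fderiv]
    simp only [hφ, ContinuousLinearMap.smul_apply, ContinuousLinearMap.sub_apply,
      innerSL_apply_apply, EuclideanSpace.inner_single_right, smul_eq_mul, one_div,
      RCLike.star_def, conj_trivial, map_one, one_mul, div_eq_mul_inv]
    ring
  have heq : (fun x => fderiv ℝ (fun x' => f (dproj R x' y)) x (EuclideanSpace.single j 1))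
      =ᶠ[nhds (0 : EuclideanSpace ℝ (Fin n))] φ :=
    hev.mono fun x hx => hkey x hx.1 hx.2
  rw [heq.fderiv_eq]
  set d0 := dproj R 0 y with hd0
  have hG0 := CostHessAux.hasFDerivAt_dproj hR y 0 hu0m.1 hu0m.2
  have hdf2 : HasDerivAt (deriv f) (deriv (deriv f) d0) d0 := by
    have h1 : ContDiffOn ℝ 1 (deriv f) (Set.Ioo 0 (R * Real.pi)) :=
      hf.deriv_of_isOpen isOpen_Ioo (by norm_num)
    exact ((h1.differentiableOn (by norm_num)).differentiableAt
      (isOpen_Ioo.mem_nhds hd0m)).hasDerivAt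
  have hcf := hdf2.comp_hasFDerivAt 0 hG0
  have h1mu : (0:ℝ) < 1 - CostHessAux.uf R y 0 ^ 2 := by
    rcases hu0m with ⟨a, b⟩; nlinarith
  have hsq0 : Real.sqrt (1 - CostHessAux.uf R y 0 ^ 2) = ‖y‖ / A := by
    rw [show 1 - CostHessAux.uf R y 0 ^ 2 = (‖y‖ / A) ^ 2 by
      rw [hu0]; field_simp; nlinarith [hA2]]
    exact Real.sqrt_sq (by positivity)
  have hsq0' : Real.sqrt (1 - (R / A) ^ 2) = ‖y‖ / A := by rw [← hu0]; exact hsq0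
  have hsqne : Real.sqrt (1 - CostHessAux.uf R y 0 ^ 2) ≠ 0 := by
    rw [hsq0]; positivity
  have hq1 : HasDerivAt (fun t : ℝ => 1 - t ^ 2) (-(2 * CostHessAux.uf R y 0))
      (CostHessAux.uf R y 0) := by
    simpa using (hasDerivAt_pow 2 (CostHessAux.uf R y 0)).const_sub 1
  have hsq1 := (Real.hasDerivAt_sqrt h1mu.ne').comp (CostHessAux.uf R y 0) hq1
  have hw1 := ((hsq1.inv hsqne).neg).const_mul R
  have hw := hw1.comp_hasFDerivAt 0 (CostHessAux.hasFDerivAt_uf hR y 0)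
  have hsfA : CostHessAux.sf R (0 : EuclideanSpace ℝ (Fin n)) * A ≠ 0 := by
    rw [CostHessAux.sf_zero hR]; positivity
  have hm1 := ((hasDerivAt_inv hsfA).comp_hasFDerivAt 0
      ((CostHessAux.hasFDerivAt_sf hR 0).mul_const A)).mul_const (y j)
  have hN0 : HasFDerivAt (fun t : EuclideanSpace ℝ (Fin n) => (R ^ 2 + ⟪t, y⟫ : ℝ))
      (innerSL ℝ y) 0 := by
    exact (hasFDerivAt_const (R ^ 2) (0 : EuclideanSpace ℝ (Fin n))).add
      (CostHessAux.hasFDerivAt_inner_right y 0) |>.congr_fderiv (zero_add _)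
  have hcube := ((hasDerivAt_pow 3
      (CostHessAux.sf R (0 : EuclideanSpace ℝ (Fin n)))).comp_hasFDerivAt 0
      (CostHessAux.hasFDerivAt_sf hR 0)).mul_const A
  have hcubene : CostHessAux.sf R (0 : EuclideanSpace ℝ (Fin n)) ^ 3 * A ≠ 0 := by
    rw [CostHessAux.sf_zero hR]; positivity
  have hm2inv := (hasDerivAt_inv hcubene).comp_hasFDerivAt 0 hcube
  have hm3 : HasFDerivAt (fun t : EuclideanSpace ℝ (Fin n) => t j)
      (EuclideanSpace.proj j : _ →L[ℝ] ℝ) 0 :=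
    (EuclideanSpace.proj (𝕜 := ℝ) j).hasFDerivAt.congr_of_eventuallyEq
      (Filter.Eventually.of_forall fun t => rfl)
  have hm := hm1.sub ((hN0.mul hm2inv).mul hm3)
  have Hφ : HasFDerivAt φ
      ((y j * (deriv (deriv f) d0 / ‖y‖ ^ 2 - deriv f d0 / ‖y‖ ^ 3)) • innerSL ℝ y +
        (deriv f d0 / ‖y‖) • (EuclideanSpace.proj j : _ →L[ℝ] ℝ)) 0 := by
    refine ((hcf.mul hw).mul hm).congr_fderiv ?_
    ext v
    simp only [hφ, ContinuousLinearMap.add_apply, ContinuousLinearMap.smul_apply,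
      ContinuousLinearMap.sub_apply, innerSL_apply_apply, smul_eq_mul,
      CostHessAux.sf_zero hR, hu0, hsq0, hsq0', inner_zero_left, inner_zero_right,
      PiLp.proj_apply, Function.comp, one_div, Function.comp_apply, Pi.mul_apply,
      Pi.sub_apply, Pi.neg_apply, Pi.inv_apply, WithLp.ofLp_zero, Pi.zero_apply, ← hA, ← hd0]
    field_simp
    ring
  rw [Hφ.fderiv]
  simp only [ContinuousLinearMap.add_apply, ContinuousLinearMap.smul_apply,
    innerSL_apply_apply, EuclideanSpace.inner_single_right, PiLp.proj_apply,
    EuclideanSpace.single_apply, smul_eq_mul, conj_trivial, mul_one]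
  rcases eq_or_ne i j with h | h
  · subst h; simp only [if_pos rfl]; field_simp
  · simp only [if_neg h, if_neg (Ne.symm h), EuclideanSpace.single_apply]
    field_simp
end

section
/- Let P₃(d) = −cos(d/(2R))/(2Rd·sin(d/(2R))) − 1/(4R²·sin²(d/(2R))) + d·cos(d/(2R))/(4R³·sin³(d/(2R))). Then lim_{d→0⁺} P₃(d) = 0. -/
open Filter Real

lemma aux_sin_div_x : Tendsto (fun x : ℝ => Real.sin x / x) (nhdsWithin 0 (Set.Ioi 0)) (nhds 1) := by
  have h := (Real.hasDerivAt_sin 0)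
  rw [hasDerivAt_iff_tendsto_slope] at h
  have h2 : Tendsto (slope Real.sin 0) (nhdsWithin 0 (Set.Ioi 0)) (nhds (Real.cos 0)) :=
    h.mono_left (nhdsWithin_mono _ (fun x hx => ne_of_gt hx))
  rw [Real.cos_zero] at h2
  exact h2.congr (fun x => by simp [slope_def_field])

lemma aux_x_div_sin : Tendsto (fun x : ℝ => x / Real.sin x) (nhdsWithin 0 (Set.Ioi 0)) (nhds 1) := by
  have := aux_sin_div_x.inv₀ one_ne_zero
  simpa [inv_div] using this

lemma aux_L2 : Tendsto (fun x : ℝ => (x * Real.cos x - Real.sin x) / x ^ 3)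
    (nhdsWithin 0 (Set.Ioi 0)) (nhds (-(1/3))) := by
  apply HasDerivAt.lhopital_zero_nhdsGT
    (f' := fun x => 1 * Real.cos x + x * (-Real.sin x) - Real.cos x)
    (g' := fun x => (3:ℕ) * x ^ 2)
  · filter_upwards with x
    exact ((hasDerivAt_id x).mul (Real.hasDerivAt_cos x)).sub (Real.hasDerivAt_sin x)
  · filter_upwards with x
    exact hasDerivAt_pow 3 x
  · filter_upwards [self_mem_nhdsWithin] with x hx
    have : (x:ℝ) ≠ 0 := ne_of_gt hx
    positivity
  · have : Tendsto (fun x : ℝ => x * Real.cos x - Real.sin x) (nhds 0) (nhds 0) := by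
      have : Continuous (fun x : ℝ => x * Real.cos x - Real.sin x) := (continuous_id.mul Real.continuous_cos).sub Real.continuous_sin
      simpa using this.tendsto 0
    exact this.mono_left nhdsWithin_le_nhds
  · have : Tendsto (fun x : ℝ => x ^ 3) (nhds 0) (nhds 0) := by
      simpa using (continuous_pow 3).tendsto (0:ℝ)
    exact this.mono_left nhdsWithin_le_nhds
  · have heq : (fun x : ℝ => -(Real.sin x / x) / 3) =ᶠ[nhdsWithin (0:ℝ) (Set.Ioi 0)]
        (fun x => (1 * Real.cos x + x * (-Real.sin x) - Real.cos x) / ((3:ℕ) * x ^ 2)) := by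
      filter_upwards [self_mem_nhdsWithin] with x hx
      have hx0 : (x:ℝ) ≠ 0 := ne_of_gt hx
      field_simp
      ring
    refine Tendsto.congr' heq ?_
    have := (aux_sin_div_x.neg).div_const 3
    convert this using 2
    norm_num

lemma aux_L1 : Tendsto (fun x : ℝ => (x - Real.sin x) / x ^ 3)
    (nhdsWithin 0 (Set.Ioi 0)) (nhds (1/6)) := by
  apply HasDerivAt.lhopital_zero_nhdsGT
    (f' := fun x => 1 - Real.cos x) (g' := fun x => (3:ℕ) * x ^ 2)
  · filter_upwards with x
    exact (hasDerivAt_id x).sub (Real.hasDerivAt_sin x)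
  · filter_upwards with x
    exact hasDerivAt_pow 3 x
  · filter_upwards [self_mem_nhdsWithin] with x hx
    have : (x:ℝ) ≠ 0 := ne_of_gt hx
    positivity
  · have : Tendsto (fun x : ℝ => x - Real.sin x) (nhds 0) (nhds 0) := by
      have : Continuous (fun x : ℝ => x - Real.sin x) := continuous_id.sub Real.continuous_sin
      simpa using this.tendsto 0
    exact this.mono_left nhdsWithin_le_nhds
  · have : Tendsto (fun x : ℝ => x ^ 3) (nhds 0) (nhds 0) := by
      simpa using (continuous_pow 3).tendsto (0:ℝ)
    exact this.mono_left nhdsWithin_le_nhds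
  · apply HasDerivAt.lhopital_zero_nhdsGT
      (f' := fun x => Real.sin x) (g' := fun x => (3:ℝ) * (2 * x))
    · filter_upwards with x
      have h : HasDerivAt (fun y : ℝ => 1 - Real.cos y) (0 - -Real.sin x) x := (hasDerivAt_const x (1:ℝ)).sub (Real.hasDerivAt_cos x)
      simpa using h
    · filter_upwards with x
      have h := (hasDerivAt_pow 2 x).const_mul (3:ℝ)
      have : ((3:ℝ) * ((2:ℕ) * x ^ (2-1))) = (3:ℝ) * (2 * x) := by push_cast; ring
      rw [this] at h
      exact h.congr_deriv rfl |>.congr_of_eventuallyEq (by filter_upwards with y; push_cast; ring)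
    · filter_upwards [self_mem_nhdsWithin] with x hx
      have : (x:ℝ) ≠ 0 := ne_of_gt hx
      positivity
    · have : Tendsto (fun x : ℝ => 1 - Real.cos x) (nhds 0) (nhds 0) := by
        have : Continuous (fun x : ℝ => 1 - Real.cos x) := continuous_const.sub Real.continuous_cos (f := fun _ : ℝ => (1:ℝ))
        simpa using this.tendsto 0
      exact this.mono_left nhdsWithin_le_nhds
    · have : Tendsto (fun x : ℝ => ((3:ℕ):ℝ) * x ^ 2) (nhds 0) (nhds 0) := by
        simpa using (show Continuous (fun x : ℝ => ((3:ℕ):ℝ) * x ^ 2) from continuous_const.mul (continuous_pow 2) (f := fun _ : ℝ => ((3:ℕ):ℝ))).tendsto (0:ℝ)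
      exact this.mono_left nhdsWithin_le_nhds
    · have heq : (fun x : ℝ => Real.sin x / ((3:ℝ) * (2 * x)))
          = fun x => Real.sin x / x / 6 := by
        funext x; rw [div_div]; ring_nf
      rw [heq]
      exact aux_sin_div_x.div_const 6

open Filter

/-- For `P₃(d) = −cos(d/(2R))/(2Rd·sin(d/(2R))) − 1/(4R²·sin²(d/(2R)))
+ d·cos(d/(2R))/(4R³·sin³(d/(2R)))` one has `lim_{d→0⁺} P₃(d) = 0`. -/
theorem P3_limit (R : ℝ) (hR : 0 < R) :
    Tendsto
      (fun d : ℝ =>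
        -(Real.cos (d / (2 * R)) / (2 * R * d * Real.sin (d / (2 * R)))) -
          1 / (4 * R ^ 2 * Real.sin (d / (2 * R)) ^ 2) +
          d * Real.cos (d / (2 * R)) / (4 * R ^ 3 * Real.sin (d / (2 * R)) ^ 3))
      (nhdsWithin 0 (Set.Ioi 0)) (nhds 0) := by
  have hcos : Tendsto Real.cos (nhdsWithin (0:ℝ) (Set.Ioi 0)) (nhds 1) := by
    have := Real.continuous_cos.tendsto 0
    rw [Real.cos_zero] at this
    exact this.mono_left nhdsWithin_le_nhds
  have hplus : Tendsto (fun x : ℝ => (x + Real.sin x) / x) (nhdsWithin (0:ℝ) (Set.Ioi 0))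
      (nhds 2) := by
    have heq : (fun x : ℝ => 1 + Real.sin x / x) =ᶠ[nhdsWithin (0:ℝ) (Set.Ioi 0)]
        (fun x => (x + Real.sin x) / x) := by
      filter_upwards [self_mem_nhdsWithin] with x hx
      have hx0 : (x:ℝ) ≠ 0 := ne_of_gt hx
      field_simp
    refine Tendsto.congr' heq ?_
    have := tendsto_const_nhds.add aux_sin_div_x (f := fun _ : ℝ => (1:ℝ))
    convert this using 2
    norm_num
  have hpow : Tendsto (fun x : ℝ => (x / Real.sin x) ^ 3) (nhdsWithin (0:ℝ) (Set.Ioi 0))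
      (nhds 1) := by
    simpa using aux_x_div_sin.pow 3
  set G : ℝ → ℝ := fun x =>
    Real.cos x * ((x - Real.sin x) / x ^ 3) * ((x + Real.sin x) / x) * (x / Real.sin x) ^ 3 +
      ((x * Real.cos x - Real.sin x) / x ^ 3) * (x / Real.sin x) ^ 3 with hGdef
  have hG : Tendsto G (nhdsWithin (0:ℝ) (Set.Ioi 0)) (nhds 0) := by
    have h1 := ((hcos.mul aux_L1).mul hplus).mul hpow
    have h2 := aux_L2.mul hpow
    have h3 := h1.add h2
    convert h3 using 2
    norm_num
  have hmap : Tendsto (fun d : ℝ => d / (2 * R)) (nhdsWithin (0:ℝ) (Set.Ioi 0))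
      (nhdsWithin (0:ℝ) (Set.Ioi 0)) := by
    apply tendsto_nhdsWithin_of_tendsto_nhds_of_eventually_within
    · have : Tendsto (fun d : ℝ => d / (2 * R)) (nhds 0) (nhds (0 / (2 * R))) :=
        tendsto_id.div_const _
      simpa using this.mono_left nhdsWithin_le_nhds
    · filter_upwards [self_mem_nhdsWithin] with d hd
      exact div_pos (show 0 < d from hd) (by positivity)
  have hcomp : Tendsto (fun d : ℝ => 1 / (4 * R ^ 2) * G (d / (2 * R)))
      (nhdsWithin (0:ℝ) (Set.Ioi 0)) (nhds 0) := by
    have := (hG.comp hmap).const_mul (1 / (4 * R ^ 2))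
    simpa using this
  refine hcomp.congr' ?_
  filter_upwards [Ioo_mem_nhdsGT_of_mem (show (0:ℝ) ∈ Set.Ico 0 (R * Real.pi) by
    constructor
    · rfl
    · positivity)] with d hd
  have hd0 : 0 < d := hd.1
  have hu0 : 0 < d / (2 * R) := div_pos hd0 (by positivity)
  have huπ : d / (2 * R) < Real.pi := by
    rw [div_lt_iff₀ (by positivity)]
    nlinarith [Real.pi_pos, hd.2]
  have hs : 0 < Real.sin (d / (2 * R)) := Real.sin_pos_of_pos_of_lt_pi hu0 huπ
  have hs0 : Real.sin (d / (2 * R)) ≠ 0 := ne_of_gt hs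
  have hd0' : d ≠ 0 := ne_of_gt hd0
  have hR0 : R ≠ 0 := ne_of_gt hR
  rw [hGdef]
  field_simp
  ring
end

section
/- Let P₁(d) = cos(d/(2R))/(2Rd·sin(d/(2R))) − 1/(4R²·sin²(d/(2R))). Then P₁(d) < 0 for all d ∈ (0, Rπ) and all R > 0. -/
/-- `P₁(d) = cos(d/(2R))/(2Rd·sin(d/(2R))) − 1/(4R²·sin²(d/(2R))) < 0` for all
`d ∈ (0, Rπ)` and all `R > 0`. -/
theorem P1_neg (R : ℝ) (hR : 0 < R) :
    ∀ d : ℝ, 0 < d → d < R * Real.pi →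
      Real.cos (d / (2 * R)) / (2 * R * d * Real.sin (d / (2 * R))) -
          1 / (4 * R ^ 2 * Real.sin (d / (2 * R)) ^ 2) < 0 := by
  intro d hd hdπ
  set θ := d / (2 * R) with hθdef
  have h2R : (0:ℝ) < 2 * R := by linarith
  have hθ0 : 0 < θ := div_pos hd h2R
  have hθπ : θ < Real.pi / 2 := by
    rw [hθdef, div_lt_div_iff₀ h2R two_pos]
    nlinarith [Real.pi_pos]
  have hθπ' : θ < Real.pi := lt_trans hθπ (by linarith [Real.pi_pos])
  have hs : 0 < Real.sin θ := Real.sin_pos_of_pos_of_lt_pi hθ0 hθπ'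
  have hc : 0 < Real.cos θ := Real.cos_pos_of_mem_Ioo ⟨by linarith, hθπ⟩
  have hsin2 : Real.sin (2 * θ) < 2 * θ := Real.sin_lt (by linarith)
  have hkey : Real.sin θ * Real.cos θ < θ := by
    have := Real.sin_two_mul θ
    nlinarith
  have hdθ : d = 2 * R * θ := by rw [hθdef]; field_simp
  rw [sub_neg, div_lt_div_iff₀ (by positivity) (by positivity)]
  rw [hdθ]
  nlinarith [mul_lt_mul_of_pos_left hkey (mul_pos (by positivity : (0:ℝ) < 4 * R ^ 2) hs)]
end

section
/- For P₁ and P₂ as in the d²/2 analysis, the sum O₂(d) = P₁(d) + P₂(d) = cos(d/(2R))/(Rd·sin(d/(2R))) − 2/d² satisfies O₂(d) < 0 for all d ∈ (0, Rπ) and all R > 0. -/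
/-- For `P₁(d) = cos(d/(2R))/(2Rd·sin(d/(2R))) − 1/(4R²·sin²(d/(2R)))` and
`P₂(d) = −2/d² + cos(d/(2R))/(2Rd·sin(d/(2R))) + 1/(4R²·sin²(d/(2R)))`, the sum
`O₂(d) = P₁(d) + P₂(d)` equals `cos(d/(2R))/(Rd·sin(d/(2R))) − 2/d²` and is negative
for all `d ∈ (0, Rπ)` and all `R > 0`. -/
theorem O2_neg (R : ℝ) (hR : 0 < R) :
    ∀ d : ℝ, 0 < d → d < R * Real.pi →
      ((Real.cos (d / (2 * R)) / (2 * R * d * Real.sin (d / (2 * R))) -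
            1 / (4 * R ^ 2 * Real.sin (d / (2 * R)) ^ 2)) +
          (-2 / d ^ 2 + Real.cos (d / (2 * R)) / (2 * R * d * Real.sin (d / (2 * R))) +
            1 / (4 * R ^ 2 * Real.sin (d / (2 * R)) ^ 2)) =
        Real.cos (d / (2 * R)) / (R * d * Real.sin (d / (2 * R))) - 2 / d ^ 2) ∧
      Real.cos (d / (2 * R)) / (R * d * Real.sin (d / (2 * R))) - 2 / d ^ 2 < 0 := by
  intro d hd hdπ
  set x := d / (2 * R) with hx
  have hx0 : 0 < x := div_pos hd (by linarith)
  have hx2 : x < Real.pi / 2 := by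
    rw [hx, div_lt_div_iff₀ (by linarith) two_pos]
    nlinarith
  have hsin : 0 < Real.sin x := Real.sin_pos_of_pos_of_lt_pi hx0
    (hx2.trans (by linarith [Real.pi_pos]))
  have hcos : 0 < Real.cos x := Real.cos_pos_of_mem_Ioo ⟨by linarith, hx2⟩
  have htan : x < Real.tan x := Real.lt_tan hx0 hx2
  have hkey : x * Real.cos x < Real.sin x := by
    have := (mul_lt_mul_of_pos_right htan hcos)
    rwa [Real.tan_eq_sin_div_cos, div_mul_cancel₀ _ hcos.ne'] at this
  constructor
  · field_simp
    ring
  · rw [sub_neg, div_lt_div_iff₀ (by positivity) (by positivity)]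
    have hdx : d = 2 * R * x := by rw [hx]; field_simp
    rw [hdx]
    nlinarith [mul_lt_mul_of_pos_left hkey (show (0:ℝ) < 4 * R ^ 2 * x by positivity)]
end

section
/- For P₁ and P₃ as in the d²/2 analysis, the sum O₃(d) = P₁(d) + P₃(d) = −1/(2R²·sin²(d/(2R))) + d·cos(d/(2R))/(4R³·sin³(d/(2R))) satisfies O₃(d) < 0 for all d ∈ (0, Rπ) and all R > 0. -/
/-- For `P₁(d) = cos(d/(2R))/(2Rd·sin(d/(2R))) − 1/(4R²·sin²(d/(2R)))` and
`P₃(d) = −cos(d/(2R))/(2Rd·sin(d/(2R))) − 1/(4R²·sin²(d/(2R)))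
+ d·cos(d/(2R))/(4R³·sin³(d/(2R)))`, the sum `O₃(d) = P₁(d) + P₃(d)` equals
`−1/(2R²·sin²(d/(2R))) + d·cos(d/(2R))/(4R³·sin³(d/(2R)))` and is negative for all
`d ∈ (0, Rπ)` and all `R > 0`. -/
theorem O3_neg (R : ℝ) (hR : 0 < R) :
    ∀ d : ℝ, 0 < d → d < R * Real.pi →
      ((Real.cos (d / (2 * R)) / (2 * R * d * Real.sin (d / (2 * R))) -
            1 / (4 * R ^ 2 * Real.sin (d / (2 * R)) ^ 2)) +
          (-(Real.cos (d / (2 * R)) / (2 * R * d * Real.sin (d / (2 * R)))) -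
            1 / (4 * R ^ 2 * Real.sin (d / (2 * R)) ^ 2) +
            d * Real.cos (d / (2 * R)) / (4 * R ^ 3 * Real.sin (d / (2 * R)) ^ 3)) =
        -1 / (2 * R ^ 2 * Real.sin (d / (2 * R)) ^ 2) +
          d * Real.cos (d / (2 * R)) / (4 * R ^ 3 * Real.sin (d / (2 * R)) ^ 3)) ∧
      -1 / (2 * R ^ 2 * Real.sin (d / (2 * R)) ^ 2) +
          d * Real.cos (d / (2 * R)) / (4 * R ^ 3 * Real.sin (d / (2 * R)) ^ 3) < 0 := by
  intro d hd hdπ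
  set x := d / (2 * R) with hx
  have h2R : (0:ℝ) < 2 * R := by linarith
  have hx0 : 0 < x := div_pos hd h2R
  have hxlt : x < Real.pi / 2 := by
    rw [hx, div_lt_div_iff₀ h2R two_pos]
    nlinarith [Real.pi_pos]
  have hsin : 0 < Real.sin x := Real.sin_pos_of_pos_of_lt_pi hx0
    (lt_trans hxlt (by linarith [Real.pi_pos]))
  have hcos : 0 < Real.cos x := Real.cos_pos_of_mem_Ioo ⟨by linarith, hxlt⟩
  constructor
  · field_simp
    ring
  · have htan : x < Real.tan x := Real.lt_tan hx0 hxlt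
    have hkey : x * Real.cos x < Real.sin x := by
      rw [Real.tan_eq_sin_div_cos, lt_div_iff₀ hcos] at htan
      linarith
    have hd_eq : d = 2 * R * x := by rw [hx]; field_simp
    have hnum : d * Real.cos x < 2 * R * Real.sin x := by
      rw [hd_eq]; nlinarith
    have hden : 0 < 4 * R ^ 3 * Real.sin x ^ 3 := by positivity
    have : -1 / (2 * R ^ 2 * Real.sin x ^ 2) +
        d * Real.cos x / (4 * R ^ 3 * Real.sin x ^ 3)
        = (d * Real.cos x - 2 * R * Real.sin x) / (4 * R ^ 3 * Real.sin x ^ 3) := by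
      field_simp
      ring
    rw [this]
    exact div_neg_of_neg_of_pos (by linarith) hden
end
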